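/- Let Z ∈ ℝ^{m×c}, B a c × r graph incidence matrix, K positive diagonal, x* ∈ ℝ₊^m, and f(x) = −ZBK Bᵀ Exp(Zᵀ Ln(x/x*)). Then for x ∈ ℝ₊^m, Ln(x/x*)ᵀ f(x) = 0 if and only if Bᵀ Zᵀ Ln(x/x*) = 0. -/

import Mathlib

/-!
Put `v = Zᵀ μ`. Since every column of `B` is `e_{S j} - e_{P j}`, pairing the vector field with `μ`
gives `μ ⬝ᵥ f = -∑ⱼ κⱼ (v_{S j} - v_{P j}) (exp v_{S j} - exp v_{P j})`. By strict monotonicity of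
`exp` every summand is nonnegative and vanishes only when `v_{S j} = v_{P j}`, i.e. when
`(Bᵀ Zᵀ μ)ⱼ = 0`.
-/

open Matrix

theorem Matrix.transpose_mulVec_apply_of_incidence {R ι η : Type*} [Ring R] [Fintype ι]
    [DecidableEq ι] {S P : η → ι} (hSP : ∀ j, S j ≠ P j) {B : Matrix ι η R}
    (hB : ∀ i j, B i j = if i = S j then 1 else if i = P j then -1 else 0) (w : ι → R) (j : η) :
    (Bᵀ *ᵥ w) j = w (S j) - w (P j) := by
  have hcol : Bᵀ j = Pi.single (S j) 1 - Pi.single (P j) 1 := by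
    funext i
    rw [transpose_apply, hB, Pi.sub_apply, Pi.single_apply, Pi.single_apply]
    by_cases hS : i = S j
    · simp [hS, hSP j]
    · by_cases hP : i = P j <;> simp [hS, hP, (hSP j).symm]
  rw [mulVec, hcol, sub_dotProduct, single_dotProduct, single_dotProduct, one_mul, one_mul]

theorem Matrix.dotProduct_mul_diagonal_mul_transpose_mulVec {R ι η ν : Type*} [CommRing R]
    [Fintype ι] [Fintype η] [Fintype ν] [DecidableEq η] (A : Matrix ι η R) (κ : η → R)
    (B : Matrix ν η R) (u : ι → R) (y : ν → R) :
    u ⬝ᵥ (A * diagonal κ * Bᵀ) *ᵥ y = ∑ j, κ j * ((Aᵀ *ᵥ u) j * (Bᵀ *ᵥ y) j) := by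
  rw [← mulVec_mulVec, ← mulVec_mulVec, dotProduct_mulVec, ← mulVec_transpose]
  simp only [dotProduct, mulVec_diagonal]
  exact Finset.sum_congr rfl fun j _ => by ring

theorem StrictMono.sub_mul_sub_pos {R : Type*} [Ring R] [LinearOrder R] [IsStrictOrderedRing R]
    {f : R → R} (hf : StrictMono f) {a b : R} (hab : a ≠ b) :
    0 < (a - b) * (f a - f b) := by
  rcases hab.lt_or_gt with h | h
  · exact mul_pos_of_neg_of_neg (sub_neg.2 h) (sub_neg.2 (hf h))
  · exact mul_pos (sub_pos.2 h) (sub_pos.2 (hf h))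

theorem StrictMono.sum_mul_sub_mul_sub_eq_zero_iff {R η : Type*} [Ring R] [LinearOrder R]
    [IsStrictOrderedRing R] [Fintype η] {f : R → R} (hf : StrictMono f) {κ : η → R}
    (hκ : ∀ j, 0 < κ j) (a b : η → R) :
    ∑ j, κ j * ((a j - b j) * (f (a j) - f (b j))) = 0 ↔ ∀ j, a j = b j := by
  have hterm : ∀ j, 0 ≤ κ j * ((a j - b j) * (f (a j) - f (b j))) ∧
      (κ j * ((a j - b j) * (f (a j) - f (b j))) = 0 ↔ a j = b j) := fun j => by
    by_cases hab : a j = b j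
    · simp [hab]
    · have hpos := mul_pos (hκ j) (hf.sub_mul_sub_pos hab)
      exact ⟨hpos.le, by simp [hpos.ne', hab]⟩
  rw [Finset.sum_eq_zero_iff_of_nonneg fun j _ => (hterm j).1]
  simp only [Finset.mem_univ, true_implies, hterm]

open Matrix in
theorem reaction_dissipation_zero_iff_general (m c r : ℕ) (S P : Fin r → Fin c)
    (hSP : ∀ j, S j ≠ P j)
    (B : Matrix (Fin c) (Fin r) ℝ)
    (hB : ∀ i j, B i j = if i = S j then 1 else if i = P j then -1 else 0)
    (κ : Fin r → ℝ) (hκ : ∀ j, 0 < κ j)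
    (Z : Matrix (Fin m) (Fin c) ℝ)
    (μ : Fin m → ℝ)
    (f : Fin m → ℝ)
    (hf : f = -((Z * B * Matrix.diagonal κ * Bᵀ) *ᵥ
      fun ρ => Real.exp ((Zᵀ *ᵥ μ) ρ))) :
    μ ⬝ᵥ f = 0 ↔ (Bᵀ * Zᵀ) *ᵥ μ = 0 := by
  have hBv := transpose_mulVec_apply_of_incidence hSP hB
  rw [hf, dotProduct_neg, neg_eq_zero, dotProduct_mul_diagonal_mul_transpose_mulVec,
    transpose_mul, funext_iff, ← mulVec_mulVec]
  simp only [hBv, Pi.zero_apply, sub_eq_zero]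
  exact Real.exp_strictMono.sum_mul_sub_mul_sub_eq_zero_iff hκ _ _

open Matrix in
theorem reaction_dissipation_zero_iff (m c r : ℕ) (S P : Fin r → Fin c)
    (hSP : ∀ j, S j ≠ P j)
    (B : Matrix (Fin c) (Fin r) ℝ)
    (hB : ∀ i j, B i j = if i = S j then 1 else if i = P j then -1 else 0)
    (κ : Fin r → ℝ) (hκ : ∀ j, 0 < κ j)
    (Z : Matrix (Fin m) (Fin c) ℝ)
    (xs : Fin m → ℝ) (hxs : ∀ i, 0 < xs i)
    (x : Fin m → ℝ) (hx : ∀ i, 0 < x i)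
    (μ : Fin m → ℝ) (hμ : μ = fun i => Real.log (x i / xs i))
    (f : Fin m → ℝ)
    (hf : f = -((Z * B * Matrix.diagonal κ * Bᵀ) *ᵥ
      fun ρ => Real.exp ((Zᵀ *ᵥ μ) ρ))) :
    μ ⬝ᵥ f = 0 ↔ (Bᵀ * Zᵀ) *ᵥ μ = 0 :=
  reaction_dissipation_zero_iff_general m c r S P hSP B hB κ hκ Z μ f hf
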